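/- For z, w ∈ ℂ with |z| > R and |w| > R (both outside the closed disk D_R of radius R), the integral (1/π) ∫_{D_R} 1/((u - z)(conj(u) - conj(w))) dA(u) equals -log(1 - R²/(z·conj(w))). -/

import Mathlib

/-!
In polar coordinates the disk integral becomes `2π ∫₀^R r · (circle average over |u| = r) dr`.
On the circle `|u| = r` one has `conj u = r² / u`, which turns the integrand into
`u / (u - r² / conj w)` times `1 / (conj w (z - u))`, holomorphic on the closed disk; the generalized
mean value property evaluates the circle average to `1 / (z conj w - r²)`. Finally
`∫₀^R 2 r / (c - r²) dr = -log (1 - R² / c)` for `R² < |c|`.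
-/

open MeasureTheory Set Complex Metric ComplexConjugate Real

section PolarCoordinates

variable {E : Type*} [NormedAddCommGroup E] [NormedSpace ℝ E]

theorem integral_Ioo_circleMap_eq_circleAverage (f : ℂ → E) (c : ℂ) (r : ℝ) :
    ∫ θ in Ioo (-π) π, f (circleMap c r θ) = (2 * π) • circleAverage f c r := by
  have hper : Function.Periodic (fun θ => f (circleMap c r θ)) (2 * π) := fun θ =>
    congrArg f (periodic_circleMap c r θ)
  rw [circleAverage_def, smul_inv_smul₀ two_pi_pos.ne', ← integral_Ioc_eq_integral_Ioo,
    ← intervalIntegral.integral_of_le (by linarith [pi_pos])]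
  convert hper.intervalIntegral_add_eq (-π) 0 using 2 <;> ring

theorem Complex.polarCoord_symm_eq_circleMap (p : ℝ × ℝ) :
    Complex.polarCoord.symm p = circleMap 0 p.1 p.2 := by
  rw [Complex.polarCoord_symm_apply, circleMap_zero, exp_mul_I, ofReal_cos, ofReal_sin]

theorem integral_closedBall_eq_integral_circleAverage {f : ℂ → E} {R : ℝ} (hR : 0 ≤ R)
    (hf : ContinuousOn f (closedBall 0 R)) :
    ∫ u in closedBall (0 : ℂ) R, f u = (2 * π) • ∫ r in 0..R, r • circleAverage f 0 r := by
  set F : ℝ × ℝ → E := fun p => p.1 • f (circleMap 0 p.1 p.2)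
  have hpolar : ∫ u in closedBall (0 : ℂ) R, f u = ∫ p in Ioc 0 R ×ˢ Ioo (-π) π, F p := by
    rw [← integral_indicator measurableSet_closedBall, ← Complex.integral_comp_polarCoord_symm]
    have hset : Complex.polarCoord.target ∩ Iic R ×ˢ univ = Ioc 0 R ×ˢ Ioo (-π) π := by
      rw [Complex.polarCoord_target, prod_inter_prod, Ioi_inter_Iic, inter_univ]
    rw [← hset, ← setIntegral_indicator (measurableSet_Iic.prod MeasurableSet.univ)]
    refine setIntegral_congr_fun Complex.polarCoord.open_target.measurableSet fun p hp => ?_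
    have hp1 : 0 < p.1 := hp.1
    simp only [indicator, mem_prod, mem_Iic, mem_univ, and_true, mem_closedBall_zero_iff,
      polarCoord_symm_eq_circleMap, norm_circleMap_zero, abs_of_pos hp1, F]
    split_ifs <;> simp
  have hint : IntegrableOn F (Ioc 0 R ×ˢ Ioo (-π) π) := by
    refine (ContinuousOn.integrableOn_compact (isCompact_Icc.prod isCompact_Icc) ?_).mono_set
      (prod_mono Ioc_subset_Icc_self Ioo_subset_Icc_self)
    refine continuousOn_fst.smul (hf.comp circleMap.continuous.continuousOn fun p hp => ?_)
    rw [mem_closedBall_zero_iff, norm_circleMap_zero, abs_of_nonneg hp.1.1]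
    exact hp.1.2
  rw [hpolar, Measure.volume_eq_prod, setIntegral_prod F hint, intervalIntegral.integral_of_le hR,
    ← integral_smul]
  refine setIntegral_congr_fun measurableSet_Ioc fun r _ => ?_
  simp only [F, integral_smul, integral_Ioo_circleMap_eq_circleAverage, smul_comm r]

end PolarCoordinates

theorem conj_eq_sq_div_of_mem_sphere {r : ℝ} {u : ℂ} (hr : r ≠ 0) (hu : u ∈ sphere (0 : ℂ) |r|) :
    conj u = r ^ 2 / u := by
  have hu' : ‖u‖ = |r| := mem_sphere_zero_iff_norm.1 hu
  have hu0 : u ≠ 0 := norm_ne_zero_iff.1 (hu' ▸ abs_ne_zero.2 hr)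
  rw [eq_div_iff hu0, mul_comm, mul_conj', hu', ← ofReal_pow, sq_abs, ofReal_pow]

theorem one_div_sub_mul_conj_sub_of_mem_sphere {r : ℝ} {z w u : ℂ} (hr : r ≠ 0) (hz : |r| < ‖z‖)
    (hw : |r| < ‖w‖) (hu : u ∈ sphere (0 : ℂ) |r|) :
    1 / ((u - z) * (conj u - conj w)) = u / (u - r ^ 2 / conj w) * (conj w * (z - u))⁻¹ := by
  have hr0 : 0 < |r| := abs_pos.2 hr
  have hu' : ‖u‖ = |r| := mem_sphere_zero_iff_norm.1 hu
  have hu0 : u ≠ 0 := norm_ne_zero_iff.1 (hu' ▸ hr0.ne')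
  have hw0 : conj w ≠ 0 := by
    rw [map_ne_zero, ← norm_pos_iff]; exact hr0.trans hw
  have huz : u - z ≠ 0 := sub_ne_zero.2 fun h => hz.ne (h ▸ hu').symm
  have hzu : z - u ≠ 0 := by rwa [← neg_sub, neg_ne_zero]
  have hrw : (r : ℂ) ^ 2 - u * conj w ≠ 0 := fun h => by
    have := congrArg norm (sub_eq_zero.1 h)
    rw [norm_mul, norm_conj, hu', norm_pow, norm_real, Real.norm_eq_abs, sq] at this
    exact (mul_lt_mul_of_pos_left hw hr0).ne this
  rw [conj_eq_sq_div_of_mem_sphere hr hu,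
    show u - r ^ 2 / conj w = -((r : ℂ) ^ 2 - u * conj w) / conj w by field_simp; ring,
    show (r : ℂ) ^ 2 / u - conj w = ((r : ℂ) ^ 2 - u * conj w) / u by field_simp]
  field_simp
  ring

theorem circleAverage_one_div_sub_mul_conj_sub {r : ℝ} {z w : ℂ} (hz : |r| < ‖z‖)
    (hw : |r| < ‖w‖) :
    circleAverage (fun u => 1 / ((u - z) * (conj u - conj w))) 0 r =
      1 / (z * conj w - r ^ 2) := by
  rcases eq_or_ne r 0 with rfl | hr
  · simp
  have hr0 : 0 < |r| := abs_pos.2 hr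
  have hw0 : conj w ≠ 0 := by
    rw [map_ne_zero, ← norm_pos_iff]; exact hr0.trans hw
  have hζ : r ^ 2 / conj w ∈ ball (0 : ℂ) |r| := by
    rw [mem_ball_zero_iff, norm_div, norm_conj, norm_pow, norm_real, Real.norm_eq_abs,
      div_lt_iff₀ (hr0.trans hw), sq]
    exact mul_lt_mul_of_pos_left hw hr0
  have hhol : DiffContOnCl ℂ (fun u => (conj w * (z - u))⁻¹) (ball 0 |r|) := by
    refine DifferentiableOn.diffContOnCl ?_
    rw [closure_ball _ hr0.ne']
    refine ((differentiableOn_const _).mul ((differentiableOn_const _).sub differentiableOn_id)).inv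
      fun u hu => mul_ne_zero hw0 (sub_ne_zero.2 fun h => ?_)
    rw [mem_closedBall_zero_iff, ← h] at hu
    exact hu.not_gt hz
  calc circleAverage (fun u => 1 / ((u - z) * (conj u - conj w))) 0 r
      = circleAverage (fun u => ((u - 0) / (u - r ^ 2 / conj w)) • (conj w * (z - u))⁻¹) 0 r :=
        circleAverage_congr_sphere fun u hu => by
          rw [sub_zero, smul_eq_mul, one_div_sub_mul_conj_sub_of_mem_sphere hr hz hw hu]
    _ = (conj w * (z - r ^ 2 / conj w))⁻¹ := hhol.circleAverage_smul_div hζ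
    _ = 1 / (z * conj w - r ^ 2) := by
        rw [mul_sub, mul_div_cancel₀ _ hw0, mul_comm, one_div]

theorem integral_ofReal_div_sub_sq {R : ℝ} {c : ℂ} (hc : R ^ 2 < ‖c‖) :
    ∫ r in (0 : ℝ)..R, (r : ℂ) / (c - r ^ 2) = -Complex.log (1 - R ^ 2 / c) / 2 := by
  have hc0 : 0 < ‖c‖ := (sq_nonneg R).trans_lt hc
  have hsq : ∀ r ∈ uIcc 0 R, ‖(r : ℂ) ^ 2‖ < ‖c‖ := fun r hr => by
    rw [norm_pow, norm_real, Real.norm_eq_abs, sq_abs]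
    exact (sq_le_sq.2 (by simpa using abs_sub_left_of_mem_uIcc hr)).trans_lt hc
  have hne : ∀ r ∈ uIcc 0 R, c - (r : ℂ) ^ 2 ≠ 0 := fun r hr h =>
    (hsq r hr).ne (by rw [sub_eq_zero.1 h])
  have hslit : ∀ r ∈ uIcc 0 R, 1 - (r : ℂ) ^ 2 / c ∈ slitPlane := fun r hr => by
    rw [sub_eq_add_neg]
    exact mem_slitPlane_of_norm_lt_one (by rw [norm_neg, norm_div, div_lt_one hc0]; exact hsq r hr)
  have hderiv : ∀ r ∈ uIcc 0 R, HasDerivAt (fun t : ℝ => -Complex.log (1 - (t : ℂ) ^ 2 / c) / 2)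
      ((r : ℂ) / (c - r ^ 2)) r := fun r hr => by
    have hpoly : HasDerivAt (fun ζ : ℂ => 1 - ζ ^ 2 / c) (-(2 * r / c)) r := by
      simpa using ((hasDerivAt_pow 2 (r : ℂ)).div_const c).const_sub 1
    convert (((hasDerivAt_log (hslit r hr)).comp (r : ℂ) hpoly).neg.div_const 2).comp_ofReal
      using 1
    · funext t
      simp only [Function.comp_apply, Pi.neg_apply, neg_div]
    · field_simp [hne r hr, norm_pos_iff.1 hc0]
  have hcont : ContinuousOn (fun r : ℝ => (r : ℂ) / (c - r ^ 2)) (uIcc 0 R) :=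
    continuous_ofReal.continuousOn.div (by fun_prop) hne
  rw [intervalIntegral.integral_eq_sub_of_hasDerivAt hderiv hcont.intervalIntegrable]
  simp

/-- For `z, w` both outside the closed disk `D_R`:
`(1/π) ∫_{D_R} 1/((u - z)(conj u - conj w)) dA(u) = -log(1 - R²/(z·conj w))`. -/
theorem disk_integral_one_div_outside_outside
    (R : ℝ) (hR : 0 < R) (z w : ℂ)
    (hz : R < ‖z‖) (hw : R < ‖w‖) :
    ((1 : ℂ) / (Real.pi : ℂ)) *
        ∫ u in Metric.closedBall (0 : ℂ) R,
          1 / ((u - z) * ((starRingEnd ℂ) u - (starRingEnd ℂ) w)) =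
      -Complex.log (1 - (R : ℂ) ^ 2 / (z * (starRingEnd ℂ) w)) := by
  have hrad : ∀ r ∈ uIcc 0 R, |r| < ‖z‖ ∧ |r| < ‖w‖ := fun r hr => by
    have : |r| ≤ R := by simpa [abs_of_pos hR] using abs_sub_left_of_mem_uIcc hr
    exact ⟨this.trans_lt hz, this.trans_lt hw⟩
  have hcont : ContinuousOn (fun u => 1 / ((u - z) * (conj u - conj w))) (closedBall 0 R) := by
    refine continuousOn_const.div (by fun_prop) fun u hu => mul_ne_zero ?_ ?_ <;>
      refine sub_ne_zero.2 fun h => (mem_closedBall_zero_iff.1 hu).not_gt ?_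
    exacts [h ▸ hz, (starRingEnd ℂ).injective h ▸ hw]
  have hc : R ^ 2 < ‖z * conj w‖ := by
    rw [norm_mul, norm_conj, sq]
    exact mul_lt_mul'' hz hw hR.le hR.le
  rw [integral_closedBall_eq_integral_circleAverage hR.le hcont,
    intervalIntegral.integral_congr (g := fun r : ℝ => (r : ℂ) / (z * conj w - r ^ 2))
      fun r hr => by
        simp only [circleAverage_one_div_sub_mul_conj_sub (hrad r hr).1 (hrad r hr).2,
          real_smul, mul_one_div],
    integral_ofReal_div_sub_sq hc, real_smul]
  push_cast
  field_simp
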